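/- Let Σ̃ be a d×d real symmetric positive semidefinite matrix whose smallest eigenvalue satisfies λ_min(Σ̃) ≥ ℓ for some ℓ > 0, let Σ̂_υ be a d×d real symmetric positive definite matrix with operator norm s = ‖Σ̂_υ‖, let λ ≥ 0, and let G be a d×d real symmetric matrix with ‖G‖ ≤ (ℓ + λ/s)/2. Then the matrices Σ̃ + λΣ̂_υ^{-1} and Σ̃ + λΣ̂_υ^{-1} + G are both invertible, and ‖(Σ̃ + λΣ̂_υ^{-1} + G)^{-1} − (Σ̃ + λΣ̂_υ^{-1})^{-1}‖ ≤ 2‖G‖ / (ℓ² + λ²/s²). (Deterministic inverse-error bound of Theorem 3.4, part 2.) -/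

import Mathlib

/-!
Put `m = ℓ + λ/s` and `A = Σ̃ + λΣ̂⁻¹`. Since `⟪x, Σ̂⁻¹x⟫ = ‖Σ̂^{-1/2}x‖² ≥ ‖x‖²/s`, the form of
`A` is bounded below by `m‖x‖²`, so `‖Ax‖ ≥ m‖x‖` and `‖(A + G)x‖ ≥ (m - ‖G‖)‖x‖ ≥ (m/2)‖x‖`.
Both matrices are therefore invertible with `‖A⁻¹‖ ≤ 1/m` and `‖(A + G)⁻¹‖ ≤ 2/m`, and the
resolvent identity `(A + G)⁻¹ - A⁻¹ = -(A + G)⁻¹ G A⁻¹` gives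
`‖(A + G)⁻¹ - A⁻¹‖ ≤ 2‖G‖/m² ≤ 2‖G‖/(ℓ² + λ²/s²)`.
-/

open Matrix

/-- Operator norm of a square real matrix induced by the Euclidean norm. -/
noncomputable def matOpNorm {d : ℕ} (A : Matrix (Fin d) (Fin d) ℝ) : ℝ :=
  ‖Matrix.toEuclideanCLM (𝕜 := ℝ) A‖

/-- Euclidean norm of a vector in ℝ^d. -/
noncomputable def vnorm {d : ℕ} (v : Fin d → ℝ) : ℝ :=
  Real.sqrt (∑ i, (v i) ^ 2)

/-- Frobenius norm of a square real matrix. -/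
noncomputable def frobNorm {d : ℕ} (A : Matrix (Fin d) (Fin d) ℝ) : ℝ :=
  Real.sqrt (∑ i, ∑ j, (A i j) ^ 2)

/-- Inverse of the (unique symmetric positive definite) square root of a
positive definite matrix: `M^{-1/2}`. -/
noncomputable def pdInvSqrt {d : ℕ} {M : Matrix (Fin d) (Fin d) ℝ} (hM : M.PosDef) :
    Matrix (Fin d) (Fin d) ℝ :=
  (hM.posSemidef.isHermitian.eigenvectorUnitary.1 *
      diagonal ((↑) ∘ Real.sqrt ∘ hM.posSemidef.isHermitian.eigenvalues) *
      (star hM.posSemidef.isHermitian.eigenvectorUnitary : Matrix (Fin d) (Fin d) ℝ))⁻¹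

/-- Smallest eigenvalue of a real symmetric matrix, via the Rayleigh quotient
(infimum of `vᵀ A v` over Euclidean-unit vectors `v`). -/
noncomputable def lamMin {d : ℕ} (A : Matrix (Fin d) (Fin d) ℝ) : ℝ :=
  ⨅ v : {v : Fin d → ℝ // ∑ i, (v i) ^ 2 = 1}, dotProduct v.1 (A *ᵥ v.1)

/-- Largest eigenvalue of a real symmetric matrix, via the Rayleigh quotient
(supremum of `vᵀ A v` over Euclidean-unit vectors `v`). -/
noncomputable def lamMax {d : ℕ} (A : Matrix (Fin d) (Fin d) ℝ) : ℝ :=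
  ⨆ v : {v : Fin d → ℝ // ∑ i, (v i) ^ 2 = 1}, dotProduct v.1 (A *ᵥ v.1)

/-- Loewner order on real symmetric matrices: `A ⪯ B` iff `B - A` is positive
semidefinite. -/
def loewnerLE {d : ℕ} (A B : Matrix (Fin d) (Fin d) ℝ) : Prop :=
  (B - A).PosSemidef

open scoped RealInnerProductSpace

lemma mul_norm_le_norm_of_mul_norm_sq_le_inner {E : Type*} [NormedAddCommGroup E]
    [InnerProductSpace ℝ E] {x y : E} {c : ℝ} (h : c * ‖x‖ ^ 2 ≤ ⟪x, y⟫) :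
    c * ‖x‖ ≤ ‖y‖ := by
  rcases (norm_nonneg x).eq_or_lt with hx | hx
  · simp [← hx]
  · refine le_of_mul_le_mul_right ?_ hx
    calc c * ‖x‖ * ‖x‖ = c * ‖x‖ ^ 2 := by ring
      _ ≤ ⟪x, y⟫ := h
      _ ≤ ‖x‖ * ‖y‖ := real_inner_le_norm x y
      _ = ‖y‖ * ‖x‖ := mul_comm _ _

lemma sub_inv_mul_mul_inv_le_two_mul_div_sq_add_sq {l t g : ℝ} (hl : 0 < l) (ht : 0 ≤ t)
    (hg : 0 ≤ g) (hgle : g ≤ (l + t) / 2) :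
    (l + t - g)⁻¹ * g * (l + t)⁻¹ ≤ 2 * g / (l ^ 2 + t ^ 2) := by
  have hm : 0 < l + t := by positivity
  have hmg : 0 < l + t - g := by linarith
  rw [mul_comm _ g, mul_assoc, ← mul_inv, ← div_eq_mul_inv,
    div_le_div_iff₀ (by positivity) (by positivity)]
  -- `(l + t - g)(l + t) ≥ (l + t)² / 2 ≥ (l² + t²) / 2`
  nlinarith [mul_le_mul_of_nonneg_left hgle hg, mul_nonneg hl.le ht,
    mul_nonneg hg (mul_nonneg hl.le ht)]

section EuclideanOperator

variable {d : ℕ}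

local notation "T" => toEuclideanCLM (𝕜 := ℝ) (n := Fin d)

lemma matOpNorm_nonneg (A : Matrix (Fin d) (Fin d) ℝ) : 0 ≤ matOpNorm A := norm_nonneg _

lemma matOpNorm_neg (A : Matrix (Fin d) (Fin d) ℝ) : matOpNorm (-A) = matOpNorm A := by
  rw [matOpNorm, map_neg, norm_neg, matOpNorm]

lemma matOpNorm_mul_le (A B : Matrix (Fin d) (Fin d) ℝ) :
    matOpNorm (A * B) ≤ matOpNorm A * matOpNorm B := by
  rw [matOpNorm, map_mul]; exact norm_mul_le _ _

lemma norm_toEuclideanCLM_apply_le (A : Matrix (Fin d) (Fin d) ℝ)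
    (x : EuclideanSpace ℝ (Fin d)) :
    ‖T A x‖ ≤ matOpNorm A * ‖x‖ :=
  (T A).le_opNorm x

lemma isUnit_of_forall_mul_norm_le {A : Matrix (Fin d) (Fin d) ℝ} {c : ℝ} (hc : 0 < c)
    (hA : ∀ x, c * ‖x‖ ≤ ‖T A x‖) : IsUnit A := by
  refine mulVec_injective_iff_isUnit.1 fun v w hvw => ?_
  have h := hA (WithLp.toLp 2 (v - w))
  rw [toEuclideanCLM_toLp, mulVec_sub, hvw, sub_self, WithLp.toLp_zero, norm_zero] at h
  have : ‖WithLp.toLp 2 (v - w)‖ = 0 :=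
    le_antisymm (nonpos_of_mul_nonpos_right h hc) (norm_nonneg _)
  simpa [sub_eq_zero] using this

lemma toEuclideanCLM_apply_inv_apply {A : Matrix (Fin d) (Fin d) ℝ} (hA : IsUnit A.det)
    (v : EuclideanSpace ℝ (Fin d)) : T A (T A⁻¹ v) = v := by
  change (T A * T A⁻¹) v = v
  rw [← map_mul, mul_nonsing_inv A hA, map_one]
  rfl

lemma matOpNorm_inv_le_of_forall_mul_norm_le {A : Matrix (Fin d) (Fin d) ℝ} {c : ℝ}
    (hc : 0 < c) (hA : ∀ x, c * ‖x‖ ≤ ‖T A x‖) : matOpNorm A⁻¹ ≤ c⁻¹ := by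
  have hdet : IsUnit A.det := (isUnit_iff_isUnit_det A).1 (isUnit_of_forall_mul_norm_le hc hA)
  refine ContinuousLinearMap.opNorm_le_bound _ (by positivity) fun v => ?_
  rw [inv_mul_eq_div, le_div_iff₀' hc]
  simpa only [toEuclideanCLM_apply_inv_apply hdet] using hA (T A⁻¹ v)

lemma lamMin_mul_sum_sq_le_dotProduct_mulVec {A : Matrix (Fin d) (Fin d) ℝ}
    (hA : A.PosSemidef) (v : Fin d → ℝ) : lamMin A * ∑ i, v i ^ 2 ≤ v ⬝ᵥ A *ᵥ v := by
  have hbdd : BddBelow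
      (Set.range fun u : {u : Fin d → ℝ // ∑ i, u i ^ 2 = 1} => u.1 ⬝ᵥ A *ᵥ u.1) :=
    ⟨0, Set.forall_mem_range.2 fun u => by simpa using hA.dotProduct_mulVec_nonneg u.1⟩
  rcases (Finset.sum_nonneg fun i _ => sq_nonneg (v i) : 0 ≤ ∑ i, v i ^ 2).eq_or_lt with h0 | hpos
  · rw [← h0, mul_zero]
    simpa using hA.dotProduct_mulVec_nonneg v
  set r := Real.sqrt (∑ i, v i ^ 2)
  have hr : 0 < r := Real.sqrt_pos.2 hpos
  have hrr : r ^ 2 = ∑ i, v i ^ 2 := Real.sq_sqrt hpos.le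
  have hunit : ∑ i, (r⁻¹ • v) i ^ 2 = 1 := by
    simp only [Pi.smul_apply, smul_eq_mul, mul_pow, ← Finset.mul_sum, inv_pow, hrr]
    exact inv_mul_cancel₀ hpos.ne'
  have hle := ciInf_le hbdd ⟨r⁻¹ • v, hunit⟩
  simp only [mulVec_smul, dotProduct_smul, smul_dotProduct, smul_eq_mul] at hle
  rw [← hrr]
  calc lamMin A * r ^ 2 ≤ r⁻¹ * (r⁻¹ * (v ⬝ᵥ A *ᵥ v)) * r ^ 2 := by gcongr; exact hle
    _ = v ⬝ᵥ A *ᵥ v := by field_simp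

lemma lamMin_mul_norm_sq_le_inner {A : Matrix (Fin d) (Fin d) ℝ} (hA : A.PosSemidef)
    (x : EuclideanSpace ℝ (Fin d)) : lamMin A * ‖x‖ ^ 2 ≤ ⟪x, T A x⟫ := by
  rw [EuclideanSpace.real_norm_sq_eq, inner_toEuclideanCLM]
  exact lamMin_mul_sum_sq_le_dotProduct_mulVec hA x.ofLp

lemma star_toEuclideanCLM_of_isHermitian {A : Matrix (Fin d) (Fin d) ℝ} (hA : A.IsHermitian) :
    star (T A) = T A := by
  rw [← map_star]; exact congrArg _ hA

open scoped MatrixOrder in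
lemma norm_sq_div_matOpNorm_le_inner_inv {S : Matrix (Fin d) (Fin d) ℝ} (hS : S.PosDef)
    (x : EuclideanSpace ℝ (Fin d)) : ‖x‖ ^ 2 / matOpNorm S ≤ ⟪x, T S⁻¹ x⟫ := by
  set R := CFC.sqrt S
  have hRR : R * R = S := CFC.sqrt_mul_sqrt_self S hS.posSemidef.nonneg
  have hRh : R.IsHermitian := (CFC.sqrt_nonneg S).posSemidef.isHermitian
  have hR : star (T R) = T R := star_toEuclideanCLM_of_isHermitian hRh
  have hRdet : IsUnit R.det := (isUnit_iff_isUnit_det R).1 <|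
    (CFC.isUnit_sqrt_iff S hS.posSemidef.nonneg).2 hS.isUnit
  have hinner : ⟪x, T S⁻¹ x⟫ = ‖T R⁻¹ x‖ ^ 2 := by
    have hR' : star (T R⁻¹) = T R⁻¹ := star_toEuclideanCLM_of_isHermitian hRh.inv
    rw [← hRR, Matrix.mul_inv_rev, map_mul, ContinuousLinearMap.mul_def,
      ContinuousLinearMap.comp_apply, ← hR', ContinuousLinearMap.star_eq_adjoint,
      ContinuousLinearMap.adjoint_inner_right,
      ← ContinuousLinearMap.star_eq_adjoint, hR', real_inner_self_eq_norm_sq]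
  have hnorm : matOpNorm R ^ 2 = matOpNorm S := by
    have h := CStarRing.norm_star_mul_self (x := T R)
    rw [hR, ← map_mul, hRR] at h
    rw [matOpNorm, matOpNorm, h, sq]
  rw [hinner]
  refine div_le_of_le_mul₀ (matOpNorm_nonneg S) (sq_nonneg _) ?_
  calc ‖x‖ ^ 2 = ‖T R (T R⁻¹ x)‖ ^ 2 := by rw [toEuclideanCLM_apply_inv_apply hRdet]
    _ ≤ (matOpNorm R * ‖T R⁻¹ x‖) ^ 2 := by gcongr; exact norm_toEuclideanCLM_apply_le R _
    _ = ‖T R⁻¹ x‖ ^ 2 * matOpNorm S := by rw [mul_pow, hnorm, mul_comm]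

lemma sub_matOpNorm_mul_norm_le_norm_add_apply {A G : Matrix (Fin d) (Fin d) ℝ} {m : ℝ}
    (hA : ∀ x, m * ‖x‖ ≤ ‖T A x‖) (x : EuclideanSpace ℝ (Fin d)) :
    (m - matOpNorm G) * ‖x‖ ≤ ‖T (A + G) x‖ := by
  rw [map_add, _root_.add_apply, sub_mul]
  linarith [hA x, norm_toEuclideanCLM_apply_le G x, norm_sub_le_norm_add (T A x) (T G x)]

lemma matOpNorm_inv_add_sub_inv_le {A G : Matrix (Fin d) (Fin d) ℝ} {m : ℝ}
    (hA : ∀ x, m * ‖x‖ ≤ ‖T A x‖) (hG : matOpNorm G < m) :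
    IsUnit A ∧ IsUnit (A + G) ∧
      matOpNorm ((A + G)⁻¹ - A⁻¹) ≤ (m - matOpNorm G)⁻¹ * matOpNorm G * m⁻¹ := by
  have hg := matOpNorm_nonneg G
  have hm : 0 < m := hg.trans_lt hG
  have hAG := sub_matOpNorm_mul_norm_le_norm_add_apply (G := G) hA
  have hAunit := isUnit_of_forall_mul_norm_le hm hA
  have hAGunit := isUnit_of_forall_mul_norm_le (sub_pos.2 hG) hAG
  refine ⟨hAunit, hAGunit, ?_⟩
  rw [inv_sub_inv (iff_of_true hAGunit hAunit), sub_add_cancel_left]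
  calc matOpNorm ((A + G)⁻¹ * -G * A⁻¹)
      ≤ matOpNorm (A + G)⁻¹ * matOpNorm (-G) * matOpNorm A⁻¹ :=
        (matOpNorm_mul_le _ _).trans <| by
          gcongr; exacts [matOpNorm_nonneg _, matOpNorm_mul_le _ _]
    _ ≤ (m - matOpNorm G)⁻¹ * matOpNorm G * m⁻¹ := by
        rw [matOpNorm_neg]
        refine mul_le_mul (mul_le_mul_of_nonneg_right ?_ hg) ?_ (matOpNorm_nonneg _) ?_
        · exact matOpNorm_inv_le_of_forall_mul_norm_le (sub_pos.2 hG) hAG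
        · exact matOpNorm_inv_le_of_forall_mul_norm_le hm hA
        · exact mul_nonneg (inv_nonneg.2 (sub_pos.2 hG).le) hg

lemma mul_norm_sq_le_inner_add_smul_inv {St Sv : Matrix (Fin d) (Fin d) ℝ}
    (hSt : St.PosSemidef) (hSv : Sv.PosDef) {lam l : ℝ} (hlam : 0 ≤ lam) (hlmin : l ≤ lamMin St)
    (x : EuclideanSpace ℝ (Fin d)) :
    (l + lam / matOpNorm Sv) * ‖x‖ ^ 2 ≤ ⟪x, T (St + lam • Sv⁻¹) x⟫ := by
  rw [map_add, map_smul, _root_.add_apply, _root_.smul_apply,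
    inner_add_right, real_inner_smul_right, add_mul, div_mul_eq_mul_div, mul_div_assoc]
  gcongr
  · exact (mul_le_mul_of_nonneg_right hlmin (sq_nonneg _)).trans
      (lamMin_mul_norm_sq_le_inner hSt x)
  · exact norm_sq_div_matOpNorm_le_inner_inv hSv x

end EuclideanOperator

theorem stmt3_general {d : ℕ} (St Sv G : Matrix (Fin d) (Fin d) ℝ)
    (hSt : St.PosSemidef) (hSv : Sv.PosDef) (lam : ℝ) (hlam : 0 ≤ lam)
    (l : ℝ) (hl : 0 < l) (hlmin : l ≤ lamMin St)
    (hGnorm : matOpNorm G ≤ (l + lam / matOpNorm Sv) / 2) :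
    IsUnit (St + lam • Sv⁻¹) ∧ IsUnit (St + lam • Sv⁻¹ + G) ∧
      matOpNorm ((St + lam • Sv⁻¹ + G)⁻¹ - (St + lam • Sv⁻¹)⁻¹) ≤
        2 * matOpNorm G / (l ^ 2 + lam ^ 2 / matOpNorm Sv ^ 2) := by
  have ht : 0 ≤ lam / matOpNorm Sv := div_nonneg hlam (matOpNorm_nonneg Sv)
  have hG' : matOpNorm G < l + lam / matOpNorm Sv := by linarith
  obtain ⟨hA, hAG, hbound⟩ := matOpNorm_inv_add_sub_inv_le (G := G)
    (fun x => mul_norm_le_norm_of_mul_norm_sq_le_inner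
      (mul_norm_sq_le_inner_add_smul_inv hSt hSv hlam hlmin x)) hG'
  refine ⟨hA, hAG, hbound.trans ?_⟩
  rw [← div_pow]
  exact sub_inv_mul_mul_inv_le_two_mul_div_sq_add_sq hl ht (matOpNorm_nonneg G) hGnorm

/-- deterministic inverse-error bound, Theorem 3.4 part 2:
if `λ_min(Σ̃) ≥ ℓ > 0` and `‖G‖ ≤ (ℓ + λ/‖Σ̂_υ‖)/2` then
`Σ̃ + λΣ̂_υ^{-1}` and `Σ̃ + λΣ̂_υ^{-1} + G` are invertible and
`‖(Σ̃ + λΣ̂_υ^{-1} + G)^{-1} − (Σ̃ + λΣ̂_υ^{-1})^{-1}‖ ≤ 2‖G‖/(ℓ² + λ²/‖Σ̂_υ‖²)`. -/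
theorem stmt3 {d : ℕ} (St Sv G : Matrix (Fin d) (Fin d) ℝ)
    (hSt : St.PosSemidef) (hSv : Sv.PosDef) (lam : ℝ) (hlam : 0 ≤ lam)
    (l : ℝ) (hl : 0 < l) (hlmin : l ≤ lamMin St)
    (hG : G.IsHermitian) (hGnorm : matOpNorm G ≤ (l + lam / matOpNorm Sv) / 2) :
    IsUnit (St + lam • Sv⁻¹) ∧ IsUnit (St + lam • Sv⁻¹ + G) ∧
      matOpNorm ((St + lam • Sv⁻¹ + G)⁻¹ - (St + lam • Sv⁻¹)⁻¹) ≤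
        2 * matOpNorm G / (l ^ 2 + lam ^ 2 / matOpNorm Sv ^ 2) :=
  stmt3_general St Sv G hSt hSv lam hlam l hl hlmin hGnorm
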